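/- Let p be a prime and let ω = (ω₁, …, ω_μ) be a tuple of complex numbers such that each ω_i is a p^n-th root of unity for some n, and no ω_i equals 1. If q ∈ ℤ[t₁^{±1}, …, t_μ^{±1}] is a Laurent polynomial with q(ω₁, …, ω_μ) = 0, then p divides q(1, …, 1); in particular q(1, …, 1) ≠ ±1. -/

import Mathlib

/-! Choose a primitive `p^(N+1)`-th root of unity `ζ` whose powers contain every `ω i`. Each monomial
of `q` then evaluates at `ω` to a power of `ζ`, so `q(ω) = f(ζ)` for an integer polynomial `f` with
`f(1) = q(1, …, 1)`. The cyclotomic polynomial `Φ_{p^(N+1)}` is the minimal polynomial of `ζ` over `ℤ`,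
hence divides `f`, and `Φ_{p^(N+1)}(1) = p`. -/

open scoped BigOperators
noncomputable section

/-- The ring of Laurent polynomials in `μ` variables with integer coefficients. -/
abbrev MvLaurent (μ : ℕ) := AddMonoidAlgebra ℤ (Fin μ →₀ ℤ)

/-- The augmentation: evaluation at `(1, …, 1)`. -/
noncomputable def lAug (μ : ℕ) : MvLaurent μ →+* ℤ :=
  ((AddMonoidAlgebra.lift ℤ ℤ (Fin μ →₀ ℤ)) 1).toRingHom

/-- Evaluation of a Laurent polynomial at a tuple `ω` of complex numbers. -/
noncomputable def lEval {μ : ℕ} (ω : Fin μ → ℂ) (p : MvLaurent μ) : ℂ :=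
  p.coeff.sum fun k c => (c : ℂ) * ∏ i, ω i ^ (k i)

open Polynomial

theorem IsPrimitiveRoot.prime_dvd_eval_one_of_aeval_eq_zero {K : Type*} [Field K] [CharZero K]
    {p k : ℕ} [Fact p.Prime] {ζ : K} (hζ : IsPrimitiveRoot ζ (p ^ (k + 1))) {f : ℤ[X]}
    (hf : aeval ζ f = 0) : (p : ℤ) ∣ f.eval 1 := by
  have hpos : 0 < p ^ (k + 1) := pow_pos (Fact.out : p.Prime).pos _
  obtain ⟨g, rfl⟩ : cyclotomic (p ^ (k + 1)) ℤ ∣ f := by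
    rw [cyclotomic_eq_minpoly hζ hpos]
    exact minpoly.isIntegrallyClosed_dvd (hζ.isIntegral hpos) hf
  rw [eval_mul, eval_one_cyclotomic_prime_pow]
  exact dvd_mul_right _ _

theorem exists_forall_pow_prime_pow_eq_one {M ι : Type*} [Monoid M] [Fintype ι] {p : ℕ}
    {ω : ι → M} (h : ∀ i, ∃ n : ℕ, ω i ^ p ^ n = 1) : ∃ N : ℕ, ∀ i, ω i ^ p ^ N = 1 := by
  classical
  choose n hn using h
  refine ⟨Finset.univ.sup n, fun i => ?_⟩
  obtain ⟨c, hc⟩ := pow_dvd_pow p (Finset.le_sup (Finset.mem_univ i) : n i ≤ _)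
  rw [hc, pow_mul, hn i, one_pow]

theorem lAug_apply {μ : ℕ} (q : MvLaurent μ) : lAug μ q = q.coeff.sum fun _ c => c := by
  simp [lAug, AddMonoidAlgebra.lift_apply]

theorem exists_polynomial_eval_one_eq_lAug_aeval_eq_lEval {μ M : ℕ} [NeZero M] {ζ : ℂ}
    (hζ : IsPrimitiveRoot ζ M) {ω : Fin μ → ℂ} (hω : ∀ i, ω i ^ M = 1) (q : MvLaurent μ) :
    ∃ f : ℤ[X], f.eval 1 = lAug μ q ∧ aeval ζ f = lEval ω q := by
  have hmono : ∀ k : Fin μ →₀ ℤ, (∏ i, ω i ^ k i) ^ M = 1 := fun k => by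
    rw [← Finset.prod_pow]
    refine Finset.prod_eq_one fun i _ => ?_
    rw [← zpow_natCast, ← zpow_mul, mul_comm, zpow_mul, zpow_natCast, hω i, one_zpow]
  choose j _ hj using fun k => hζ.eq_pow_of_pow_eq_one (hmono k)
  refine ⟨q.coeff.sum fun k c => C c * X ^ j k, ?_, ?_⟩
  · simp [Finsupp.sum, eval_finsetSum, lAug_apply]
  · simp [Finsupp.sum, lEval, hj]

theorem prime_dvd_lAug_of_lEval_eq_zero {μ p k : ℕ} (hp : p.Prime) {ω : Fin μ → ℂ}
    (hω : ∀ i, ω i ^ p ^ (k + 1) = 1) {q : MvLaurent μ} (hq : lEval ω q = 0) :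
    (p : ℤ) ∣ lAug μ q := by
  have := Fact.mk hp
  have : NeZero (p ^ (k + 1)) := ⟨pow_ne_zero _ hp.ne_zero⟩
  have hζ := Complex.isPrimitiveRoot_exp (p ^ (k + 1)) (NeZero.ne _)
  obtain ⟨f, hf1, hfζ⟩ := exists_polynomial_eval_one_eq_lAug_aeval_eq_lEval hζ hω q
  exact hf1 ▸ hζ.prime_dvd_eval_one_of_aeval_eq_zero (hfζ.trans hq)

theorem prime_power_roots_not_concordance_root_general (μ : ℕ) (p : ℕ) (hp : p.Prime)
    (ω : Fin μ → ℂ) (hroot : ∀ i, ∃ n : ℕ, ω i ^ (p ^ n) = 1)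
    (q : MvLaurent μ) (hq : lEval ω q = 0) :
    (p : ℤ) ∣ lAug μ q ∧ lAug μ q ≠ 1 ∧ lAug μ q ≠ -1 := by
  obtain ⟨N, hN⟩ := exists_forall_pow_prime_pow_eq_one hroot
  have hω : ∀ i, ω i ^ p ^ (N + 1) = 1 := fun i => by rw [pow_succ, pow_mul, hN i, one_pow]
  have hdvd := prime_dvd_lAug_of_lEval_eq_zero hp hω hq
  have hndvd : ¬(p : ℤ) ∣ 1 := (Nat.prime_iff_prime_int.mp hp).not_dvd_one
  refine ⟨hdvd, fun h => hndvd (h ▸ hdvd), fun h => hndvd ?_⟩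
  rwa [h, dvd_neg] at hdvd

/-- If each coordinate of `ω` is a nontrivial `p^n`-th root of unity (`p` prime) and a
Laurent polynomial `q` vanishes at `ω`, then `p` divides `q(1,…,1)`; in particular
`q(1,…,1) ≠ ±1`. -/
theorem prime_power_roots_not_concordance_root (μ : ℕ) (p : ℕ) (hp : p.Prime)
    (ω : Fin μ → ℂ) (hroot : ∀ i, ∃ n : ℕ, ω i ^ (p ^ n) = 1) (hne : ∀ i, ω i ≠ 1)
    (q : MvLaurent μ) (hq : lEval ω q = 0) :
    (p : ℤ) ∣ lAug μ q ∧ lAug μ q ≠ 1 ∧ lAug μ q ≠ -1 :=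
  prime_power_roots_not_concordance_root_general μ p hp ω hroot q hq
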